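/- Let 0 → M → N → P → 0 be an admissible short exact sequence of A-sets (all morphisms normal) with P projective. Then the sequence splits: it is isomorphic to the canonical sequence 0 → M → M ∨ P → P → 0. -/

import Mathlib

universe u

/-- An `A`-set over a commutative monoid with zero `A`: a pointed set with an `A`-action
such that `(ab).m = a.(b.m)`, `a.∗ = ∗`, `0.m = ∗` and `1.m = m`. -/
structure ASet (A : Type u) [CommMonoidWithZero A] : Type (u + 1) where
  carrier : Type u
  pt : carrier
  act : A → carrier → carrier
  act_mul : ∀ a b m, act (a * b) m = act a (act b m)
  act_pt : ∀ a, act a pt = pt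
  zero_act : ∀ m, act 0 m = pt
  one_act : ∀ m, act 1 m = m

variable {A : Type u} [CommMonoidWithZero A]

/-- A morphism of `A`-sets: a basepoint-preserving `A`-equivariant map. -/
structure ASetHom (M N : ASet A) where
  toFun : M.carrier → N.carrier
  map_pt : toFun M.pt = N.pt
  map_act : ∀ a m, toFun (M.act a m) = N.act a (toFun m)

namespace ASetHom

theorem ext {M N : ASet A} {f g : ASetHom M N} (h : ∀ m, f.toFun m = g.toFun m) :
    f = g := by
  cases f; cases g
  simp only [mk.injEq]
  exact funext h

/-- The identity morphism of `A`-sets. -/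
def id (M : ASet A) : ASetHom M M := ⟨fun m => m, rfl, fun _ _ => rfl⟩

/-- Composition of morphisms of `A`-sets. -/
def comp {M N P : ASet A} (g : ASetHom N P) (f : ASetHom M N) : ASetHom M P :=
  ⟨fun m => g.toFun (f.toFun m), by rw [f.map_pt, g.map_pt],
    fun a m => by rw [f.map_act, g.map_act]⟩

/-- Monomorphism in the category of `A`-sets. -/
def IsMono {M N : ASet A} (f : ASetHom M N) : Prop :=
  ∀ (P : ASet A) (g h : ASetHom P M), f.comp g = f.comp h → g = h

/-- Epimorphism in the category of `A`-sets. -/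
def IsEpi {M N : ASet A} (f : ASetHom M N) : Prop :=
  ∀ (P : ASet A) (g h : ASetHom N P), g.comp f = h.comp f → g = h

/-- Isomorphism in the category of `A`-sets. -/
def IsIso {M N : ASet A} (f : ASetHom M N) : Prop :=
  ∃ g : ASetHom N M, g.comp f = id M ∧ f.comp g = id N

/-- A morphism of `A`-sets is normal if each fibre over a non-basepoint element
contains at most one element. -/
def IsNormal {M N : ASet A} (f : ASetHom M N) : Prop :=
  ∀ m m', f.toFun m = f.toFun m' → f.toFun m ≠ N.pt → m = m'

/-- The kernel of a morphism of `A`-sets: the preimage of the basepoint. -/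
def kerSet {M N : ASet A} (f : ASetHom M N) : Set M.carrier :=
  {m | f.toFun m = N.pt}

end ASetHom

namespace ASet

/-- The sub-`A`-set determined by a subset stable under the action and containing the
basepoint. -/
def sub (M : ASet A) (S : Set M.carrier) (hpt : M.pt ∈ S)
    (hact : ∀ a : A, ∀ m ∈ S, M.act a m ∈ S) : ASet A where
  carrier := ↥S
  pt := ⟨M.pt, hpt⟩
  act a m := ⟨M.act a m.1, hact a m.1 m.2⟩
  act_mul a b m := Subtype.ext (M.act_mul a b m.1)
  act_pt a := Subtype.ext (M.act_pt a)
  zero_act m := Subtype.ext (M.zero_act m.1)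
  one_act m := Subtype.ext (M.one_act m.1)

/-- The relation collapsing the subset `S` to a point. -/
def quotRel (M : ASet A) (S : Set M.carrier) : M.carrier → M.carrier → Prop :=
  fun m m' => m = m' ∨ (m ∈ S ∧ m' ∈ S)

/-- The quotient `A`-set `M/S` collapsing an action-stable subset `S` to the basepoint. -/
def quot (M : ASet A) (S : Set M.carrier)
    (hact : ∀ a : A, ∀ m ∈ S, M.act a m ∈ S) : ASet A where
  carrier := Quot (M.quotRel S)
  pt := Quot.mk _ M.pt
  act a := Quot.lift (fun m => Quot.mk _ (M.act a m)) (by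
    rintro m m' (rfl | ⟨h1, h2⟩)
    · rfl
    · exact Quot.sound (Or.inr ⟨hact a m h1, hact a m' h2⟩))
  act_mul a b q := Quot.inductionOn q fun m => by
    show Quot.mk _ (M.act (a * b) m) = Quot.mk _ (M.act a (M.act b m))
    rw [M.act_mul]
  act_pt a := by
    show Quot.mk _ (M.act a M.pt) = Quot.mk _ M.pt
    rw [M.act_pt]
  zero_act q := Quot.inductionOn q fun m => by
    show Quot.mk _ (M.act 0 m) = Quot.mk _ M.pt
    rw [M.zero_act]
  one_act q := Quot.inductionOn q fun m => by
    show Quot.mk _ (M.act 1 m) = Quot.mk _ m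
    rw [M.one_act]

end ASet

namespace ASetHom

theorem kerSet_stable {M N : ASet A} (f : ASetHom M N) :
    ∀ a : A, ∀ m ∈ f.kerSet, M.act a m ∈ f.kerSet := by
  intro a m hm
  show f.toFun (M.act a m) = N.pt
  rw [f.map_act, hm, N.act_pt]

/-- The image of a morphism of `A`-sets, as an `A`-set. -/
def imageASet {M N : ASet A} (f : ASetHom M N) : ASet A :=
  N.sub (Set.range f.toFun) ⟨M.pt, f.map_pt⟩
    (fun a n hn => by
      obtain ⟨m, rfl⟩ := hn
      exact ⟨M.act a m, f.map_act a m⟩)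

/-- The coimage `M/ker f` of a morphism of `A`-sets. -/
def coimage {M N : ASet A} (f : ASetHom M N) : ASet A :=
  M.quot f.kerSet f.kerSet_stable

/-- The canonical morphism `M/ker f → im f`. -/
def canonical {M N : ASet A} (f : ASetHom M N) : ASetHom f.coimage f.imageASet where
  toFun := Quot.lift (fun m => (⟨f.toFun m, ⟨m, rfl⟩⟩ : ↥(Set.range f.toFun))) (by
    rintro m m' (rfl | ⟨h1, h2⟩)
    · rfl
    · exact Subtype.ext (h1.trans h2.symm))
  map_pt := Subtype.ext f.map_pt
  map_act a q := Quot.inductionOn q fun m => Subtype.ext (f.map_act a m)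

end ASetHom

namespace ASet

attribute [local instance] Classical.propDecidable

/-- `A` as an `A`-set over itself (basepoint `0`). -/
def ofSelf (A : Type u) [CommMonoidWithZero A] : ASet A :=
  ⟨A, 0, (· * ·), mul_assoc, mul_zero, zero_mul, one_mul⟩

/-- The `A`-set `eA` for an element `e` of `A`. -/
def idem (A : Type u) [CommMonoidWithZero A] (e : A) : ASet A :=
  (ofSelf A).sub {x | ∃ a : A, x = e * a} ⟨0, (mul_zero e).symm⟩
    (fun a m hm => by
      obtain ⟨b, rfl⟩ := hm
      exact ⟨a * b, mul_left_comm a e b⟩)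

/-- Underlying carrier of the wedge of a family of `A`-sets. -/
def WedgeCarrier {ι : Type u} (Ms : ι → ASet A) : Type u :=
  Option ((i : ι) × {m : (Ms i).carrier // m ≠ (Ms i).pt})

/-- Action on the wedge carrier. -/
noncomputable def wedgeAct {ι : Type u} (Ms : ι → ASet A) (a : A)
    (x : WedgeCarrier Ms) : WedgeCarrier Ms :=
  x.bind fun p =>
    if h : (Ms p.1).act a p.2.1 = (Ms p.1).pt then none else some ⟨p.1, ⟨_, h⟩⟩

theorem wedgeAct_mul {ι : Type u} (Ms : ι → ASet A) (a b : A) (x : WedgeCarrier Ms) :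
    wedgeAct Ms (a * b) x = wedgeAct Ms a (wedgeAct Ms b x) := by
  cases x with
  | none => rfl
  | some p =>
    obtain ⟨i, m, hm⟩ := p
    simp only [wedgeAct, Option.bind]
    by_cases h1 : (Ms i).act b m = (Ms i).pt
    · rw [dif_pos h1, dif_pos (by rw [(Ms i).act_mul, h1, (Ms i).act_pt])]
    · rw [dif_neg h1]
      simp only [Option.bind]
      by_cases h2 : (Ms i).act a ((Ms i).act b m) = (Ms i).pt
      · rw [dif_pos (by rw [(Ms i).act_mul]; exact h2), dif_pos h2]
      · rw [dif_neg (by rw [(Ms i).act_mul]; exact h2), dif_neg h2]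
        simp only [(Ms i).act_mul]
        rfl

/-- The wedge (coproduct) of a family of `A`-sets. -/
noncomputable def wedge {ι : Type u} (Ms : ι → ASet A) : ASet A where
  carrier := WedgeCarrier Ms
  pt := none
  act := wedgeAct Ms
  act_mul := wedgeAct_mul Ms
  act_pt _ := rfl
  zero_act x := by
    cases x with
    | none => rfl
    | some p =>
      simp only [wedgeAct, Option.bind]
      rw [dif_pos ((Ms p.1).zero_act p.2.1)]
  one_act x := by
    cases x with
    | none => rfl
    | some p =>
      obtain ⟨i, m, hm⟩ := p
      simp only [wedgeAct, Option.bind]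
      rw [dif_neg (by rw [(Ms i).one_act]; exact hm)]
      simp only [(Ms i).one_act]
      rfl

/-- `A`-sets `M` and `N` are isomorphic. -/
def Iso (M N : ASet A) : Prop := ∃ f : ASetHom M N, f.IsIso

/-- The free `A`-set on a (index) type `S`, i.e. `⋁_{s ∈ S} A·s`. -/
noncomputable def free (A : Type u) [CommMonoidWithZero A] (S : Type u) : ASet A :=
  wedge (fun _ : S => ofSelf A)

/-- A projective `A`-set: morphisms out of it lift along every epimorphism. -/
def IsProjective (P : ASet A) : Prop :=
  ∀ (M N : ASet A) (e : ASetHom M N), e.IsEpi →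
    ∀ f : ASetHom P N, ∃ g : ASetHom P M, e.comp g = f

end ASet

namespace ASet

attribute [local instance] Classical.propDecidable

/-- The binary wedge `M ∨ N` of two `A`-sets. -/
noncomputable def wedge2 (M N : ASet A) : ASet A where
  carrier := Option ({m : M.carrier // m ≠ M.pt} ⊕ {n : N.carrier // n ≠ N.pt})
  pt := none
  act a x := x.bind (Sum.elim
    (fun m => if h : M.act a m.1 = M.pt then none else some (.inl ⟨_, h⟩))
    (fun n => if h : N.act a n.1 = N.pt then none else some (.inr ⟨_, h⟩)))
  act_mul a b x := by
    cases x with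
    | none => rfl
    | some p =>
      cases p with
      | inl m =>
        simp only [Option.bind, Sum.elim_inl]
        by_cases h1 : M.act b m.1 = M.pt
        · rw [dif_pos h1, dif_pos (by rw [M.act_mul, h1, M.act_pt])]
        · rw [dif_neg h1]
          simp only [Option.bind, Sum.elim_inl]
          by_cases h2 : M.act a (M.act b m.1) = M.pt
          · rw [dif_pos (by rw [M.act_mul]; exact h2), dif_pos h2]
          · rw [dif_neg (by rw [M.act_mul]; exact h2), dif_neg h2]
            simp only [M.act_mul]
      | inr n =>
        simp only [Option.bind, Sum.elim_inr]
        by_cases h1 : N.act b n.1 = N.pt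
        · rw [dif_pos h1, dif_pos (by rw [N.act_mul, h1, N.act_pt])]
        · rw [dif_neg h1]
          simp only [Option.bind, Sum.elim_inr]
          by_cases h2 : N.act a (N.act b n.1) = N.pt
          · rw [dif_pos (by rw [N.act_mul]; exact h2), dif_pos h2]
          · rw [dif_neg (by rw [N.act_mul]; exact h2), dif_neg h2]
            simp only [N.act_mul]
  act_pt _ := rfl
  zero_act x := by
    cases x with
    | none => rfl
    | some p =>
      cases p with
      | inl m => simp only [Option.bind, Sum.elim_inl]; rw [dif_pos (M.zero_act m.1)]
      | inr n => simp only [Option.bind, Sum.elim_inr]; rw [dif_pos (N.zero_act n.1)]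
  one_act x := by
    cases x with
    | none => rfl
    | some p =>
      cases p with
      | inl m =>
        simp only [Option.bind, Sum.elim_inl]
        rw [dif_neg (by rw [M.one_act]; exact m.2)]
        simp only [M.one_act]
      | inr n =>
        simp only [Option.bind, Sum.elim_inr]
        rw [dif_neg (by rw [N.one_act]; exact n.2)]
        simp only [N.one_act]

/-- The canonical inclusion `M → M ∨ N`. -/
noncomputable def wedge2.inl (M N : ASet A) : ASetHom M (wedge2 M N) where
  toFun m := if h : m = M.pt then none else some (.inl ⟨m, h⟩)
  map_pt := dif_pos rfl
  map_act a m := by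
    dsimp only [wedge2]
    by_cases h : m = M.pt
    · subst h
      rw [dif_pos (M.act_pt a), dif_pos rfl]
      rfl
    · rw [dif_neg h]
      dsimp only [wedge2, Option.bind, Sum.elim_inl]

/-- The canonical projection `M ∨ N → N`. -/
noncomputable def wedge2.snd (M N : ASet A) : ASetHom (wedge2 M N) N where
  toFun x := x.elim N.pt (Sum.elim (fun _ => N.pt) (fun n => n.1))
  map_pt := rfl
  map_act a x := by
    cases x with
    | none => exact (N.act_pt a).symm
    | some p =>
      cases p with
      | inl m =>
        dsimp only [wedge2, Option.bind, Sum.elim_inl]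
        by_cases h : M.act a m.1 = M.pt
        · rw [dif_pos h]
          exact (N.act_pt a).symm
        · rw [dif_neg h]
          exact (N.act_pt a).symm
      | inr n =>
        dsimp only [wedge2, Option.bind, Sum.elim_inr]
        by_cases h : N.act a n.1 = N.pt
        · rw [dif_pos h]
          exact h.symm
        · rw [dif_neg h]
          rfl

end ASet

namespace ASet

/-- The localization relation on `S × M`: `(s,m) ∼ (s',m')` iff `ts.m' = ts'.m` for
some `t ∈ S`. -/
def locRel (S : Submonoid A) (M : ASet A) :
    (S × M.carrier) → (S × M.carrier) → Prop :=
  fun p q => ∃ t : S, M.act (↑t * ↑p.1) q.2 = M.act (↑t * ↑q.1) p.2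

/-- The localization `S⁻¹M` of an `A`-set at a multiplicative subset `S`, with the
`A`-action `a.(m/s) = (a.m)/s`. -/
def loc (S : Submonoid A) (M : ASet A) : ASet A where
  carrier := Quot (locRel S M)
  pt := Quot.mk _ (1, M.pt)
  act a := Quot.lift (fun p => Quot.mk _ (p.1, M.act a p.2)) (by
    rintro ⟨s, m⟩ ⟨s', m'⟩ ⟨t, ht⟩
    dsimp only at ht
    refine Quot.sound ⟨t, ?_⟩
    dsimp only
    rw [← M.act_mul, mul_comm _ a, M.act_mul, ht, ← M.act_mul, mul_comm a, M.act_mul])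
  act_mul a b q := Quot.inductionOn q fun p => by
    show Quot.mk _ (p.1, M.act (a * b) p.2) = Quot.mk _ (p.1, M.act a (M.act b p.2))
    rw [M.act_mul]
  act_pt a := by
    show Quot.mk _ ((1 : S), M.act a M.pt) = Quot.mk _ ((1 : S), M.pt)
    rw [M.act_pt]
  zero_act q := Quot.inductionOn q fun p => by
    show Quot.mk _ (p.1, M.act 0 p.2) = Quot.mk _ ((1 : S), M.pt)
    rw [M.zero_act]
    exact Quot.sound ⟨1, by simp only [M.act_pt]⟩
  one_act q := Quot.inductionOn q fun p => by
    show Quot.mk _ (p.1, M.act 1 p.2) = Quot.mk _ p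
    rw [M.one_act]

end ASet

namespace ASetHom

/-- The localization `S⁻¹f` of a morphism of `A`-sets. -/
def locMap (S : Submonoid A) {M N : ASet A} (f : ASetHom M N) :
    ASetHom (ASet.loc S M) (ASet.loc S N) where
  toFun := Quot.lift (fun p => Quot.mk _ (p.1, f.toFun p.2)) (by
    rintro ⟨s, m⟩ ⟨s', m'⟩ ⟨t, ht⟩
    dsimp only at ht
    refine Quot.sound ⟨t, ?_⟩
    dsimp only
    rw [← f.map_act, ← f.map_act, ht])
  map_pt := by
    show Quot.mk _ ((1 : S), f.toFun M.pt) = Quot.mk _ ((1 : S), N.pt)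
    rw [f.map_pt]
  map_act a q := Quot.inductionOn q fun p => by
    show Quot.mk _ (p.1, f.toFun (M.act a p.2)) = Quot.mk _ (p.1, N.act a (f.toFun p.2))
    rw [f.map_act]

end ASetHom

namespace ASet

/-- The generating relation for the tensor product of two `A`-sets:
`(a.m, n) ∼ (m, a.n)`. -/
def tensorRel (M N : ASet A) :
    (M.carrier × N.carrier) → (M.carrier × N.carrier) → Prop :=
  fun p q => ∃ (a : A) (m : M.carrier) (n : N.carrier),
    p = (M.act a m, n) ∧ q = (m, N.act a n)

/-- The tensor product `M ⊗_A N` of two `A`-sets. -/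
def tensor (M N : ASet A) : ASet A where
  carrier := Quot (tensorRel M N)
  pt := Quot.mk _ (M.pt, N.pt)
  act a := Quot.lift (fun p => Quot.mk _ (M.act a p.1, p.2)) (by
    rintro p q ⟨b, m, n, rfl, rfl⟩
    dsimp only
    rw [← M.act_mul, mul_comm a b, M.act_mul]
    exact Quot.sound ⟨b, M.act a m, n, rfl, rfl⟩)
  act_mul a b q := Quot.inductionOn q fun p => by
    show Quot.mk _ (M.act (a * b) p.1, p.2) = Quot.mk _ (M.act a (M.act b p.1), p.2)
    rw [M.act_mul]
  act_pt a := by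
    show Quot.mk _ (M.act a M.pt, N.pt) = Quot.mk _ (M.pt, N.pt)
    rw [M.act_pt]
  zero_act q := Quot.inductionOn q fun p => by
    show Quot.mk _ (M.act 0 p.1, p.2) = Quot.mk _ (M.pt, N.pt)
    rw [M.zero_act]
    exact Quot.sound ⟨0, M.pt, p.2, by rw [M.zero_act], by rw [N.zero_act]⟩
  one_act q := Quot.inductionOn q fun p => by
    show Quot.mk _ (M.act 1 p.1, p.2) = Quot.mk _ p
    rw [M.one_act]

/-- The product of a family of `A`-sets. -/
def pi {ι : Type u} (Ms : ι → ASet A) : ASet A where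
  carrier := ∀ i, (Ms i).carrier
  pt := fun i => (Ms i).pt
  act a m := fun i => (Ms i).act a (m i)
  act_mul a b m := funext fun i => (Ms i).act_mul a b (m i)
  act_pt a := funext fun i => (Ms i).act_pt a
  zero_act m := funext fun i => (Ms i).zero_act (m i)
  one_act m := funext fun i => (Ms i).one_act (m i)

/-- The linearization `M_ℤ` of an `A`-set: the free abelian group on `M ∖ {∗}`. -/
abbrev lin (M : ASet A) : Type u := {m : M.carrier // m ≠ M.pt} →₀ ℤ

end ASet

namespace ASetHom

attribute [local instance] Classical.propDecidable

/-- The linearization `f_ℤ : M_ℤ → N_ℤ` of a morphism of `A`-sets. -/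
noncomputable def lin {M N : ASet A} (f : ASetHom M N) : M.lin →+ N.lin :=
  Finsupp.liftAddHom fun m =>
    if h : f.toFun m.1 = N.pt then 0 else Finsupp.singleAddHom ⟨f.toFun m.1, h⟩

end ASetHom

namespace ASet

/-- The action of `a ∈ A` on `M`, as a morphism of `A`-sets. -/
def actHom (M : ASet A) (a : A) : ASetHom M M :=
  ⟨M.act a, M.act_pt a, fun b m => by
    rw [← M.act_mul, mul_comm a b, M.act_mul]⟩

/-- The linearization of the action of `a ∈ A` on `M_ℤ`. -/
noncomputable def actLin (M : ASet A) (a : A) : M.lin →+ M.lin := (M.actHom a).lin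

/-- An `A`-set is finitely generated if it is a finite union of orbits `A.mᵢ`. -/
def FG (M : ASet A) : Prop :=
  ∃ s : Finset M.carrier, ∀ m : M.carrier, ∃ g ∈ s, ∃ a : A, m = M.act a g

/-- A subset of an `A`-set is an `A`-subset if it contains the basepoint and is stable
under the action. -/
def IsSubASet (M : ASet A) (N : Set M.carrier) : Prop :=
  M.pt ∈ N ∧ ∀ a : A, ∀ m ∈ N, M.act a m ∈ N

/-- An `A`-subset is finitely generated. -/
def SubFG (M : ASet A) (N : Set M.carrier) : Prop :=
  ∃ s : Finset M.carrier, ↑s ⊆ N ∧ ∀ m ∈ N, ∃ g ∈ s, ∃ a : A, m = M.act a g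

/-- An `A`-set is Noetherian if every `A`-subset is finitely generated. -/
def Noetherian (M : ASet A) : Prop :=
  ∀ N : Set M.carrier, M.IsSubASet N → M.SubFG N

/-- `M_ℤ` is a finitely generated `A_ℤ`-module: there are finitely many elements whose
`A`-translates generate `M_ℤ` as an abelian group. -/
def linFG (M : ASet A) : Prop :=
  ∃ s : Finset M.lin,
    AddSubgroup.closure {y : M.lin | ∃ g ∈ s, ∃ a : A, y = M.actLin a g} = ⊤

end ASet

namespace ASetHom

/-- The kernel of a morphism of `A`-sets, as an `A`-set. -/
def kerASet {M N : ASet A} (f : ASetHom M N) : ASet A :=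
  M.sub f.kerSet f.map_pt f.kerSet_stable

/-- The canonical inclusion `(ker f)_ℤ → M_ℤ`. -/
noncomputable def kerLinIncl {M N : ASet A} (f : ASetHom M N) :
    (f.kerASet).lin →+ M.lin :=
  Finsupp.mapDomain.addMonoidHom fun x =>
    (⟨x.1.1, fun h => x.2 (Subtype.ext h)⟩ : {m : M.carrier // m ≠ M.pt})

/-- `f` is a kernel of `g` (via the concrete description of kernels of `A`-sets). -/
def IsKernelOf {M N P : ASet A} (f : ASetHom M N) (g : ASetHom N P) : Prop :=
  Function.Injective f.toFun ∧ Set.range f.toFun = g.kerSet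

/-- `f` is a cokernel of `g` (via the concrete description `N ≅ M/im g`). -/
def IsCokernelOf {M N P : ASet A} (f : ASetHom M N) (g : ASetHom P M) : Prop :=
  Function.Surjective f.toFun ∧
    ∀ m m', f.toFun m = f.toFun m' ↔
      (m = m' ∨ (m ∈ Set.range g.toFun ∧ m' ∈ Set.range g.toFun))

end ASetHom

/-!
Since `P` is projective and `j` is surjective, hence epi, `j` has a section `s`. Then `i` and
`s` induce `σ : M ∨ P → N` with `σ ∘ inl = i` and `j ∘ σ = snd`. It is injective because `j`
recovers the `P`-component and `i` (normal with trivial kernel) is injective; it is surjective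
because an element `n` outside `ker j = im i` has the same non-basepoint image under `j` as
`s (j n)`, so equals it by normality of `j`. A bijective morphism of `A`-sets is an
isomorphism, and `σ⁻¹` is the splitting.
-/

namespace ASetHom

variable {M N P : ASet A}

theorem isEpi_of_surjective (f : ASetHom M N) (hf : Function.Surjective f.toFun) :
    f.IsEpi := by
  intro Q g h hgh
  refine ext fun n => ?_
  obtain ⟨m, rfl⟩ := hf n
  exact congrArg (fun k => k.toFun m) hgh

theorem injective_of_isNormal (f : ASetHom M N) (hf : f.IsNormal)
    (hker : ∀ m, f.toFun m = N.pt → m = M.pt) : Function.Injective f.toFun := by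
  intro m m' h
  by_cases hm : f.toFun m = N.pt
  · rw [hker m hm, hker m' (h ▸ hm)]
  · exact hf m m' h hm

theorem exists_section_of_isProjective (j : ASetHom N P) (hP : P.IsProjective)
    (hj : Function.Surjective j.toFun) : ∃ s : ASetHom P N, ∀ p, j.toFun (s.toFun p) = p := by
  obtain ⟨s, hs⟩ := hP N P j (j.isEpi_of_surjective hj) (id P)
  exact ⟨s, fun p => congrArg (fun k => k.toFun p) hs⟩

noncomputable def invOfBijective (f : ASetHom M N) (hf : Function.Bijective f.toFun) :
    ASetHom N M where
  toFun := (Equiv.ofBijective _ hf).symm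
  map_pt := hf.1 (by simp only [Equiv.ofBijective_apply_symm_apply, f.map_pt])
  map_act a n := hf.1 (by simp only [Equiv.ofBijective_apply_symm_apply, f.map_act])

variable (f : ASetHom M N) (hf : Function.Bijective f.toFun)

theorem invOfBijective_apply_apply (m : M.carrier) :
    (f.invOfBijective hf).toFun (f.toFun m) = m :=
  (Equiv.ofBijective _ hf).symm_apply_apply m

theorem apply_invOfBijective_apply (n : N.carrier) :
    f.toFun ((f.invOfBijective hf).toFun n) = n :=
  (Equiv.ofBijective _ hf).apply_symm_apply n

theorem isIso_invOfBijective : (f.invOfBijective hf).IsIso :=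
  ⟨f, ext (f.apply_invOfBijective_apply hf), ext (f.invOfBijective_apply_apply hf)⟩

theorem invOfBijective_comp_of_comp_eq {a : ASetHom P M} {b : ASetHom P N}
    (h : f.comp a = b) : (f.invOfBijective hf).comp b = a :=
  ext fun p => by rw [← h]; exact f.invOfBijective_apply_apply hf _

theorem comp_invOfBijective_of_comp_eq {c : ASetHom N P} {d : ASetHom M P}
    (h : c.comp f = d) : d.comp (f.invOfBijective hf) = c :=
  ext fun n => by rw [← h]; exact congrArg c.toFun (f.apply_invOfBijective_apply hf n)

end ASetHom

namespace ASet.wedge2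

variable {M N Q : ASet A}

theorem exists_inl_of_snd_eq_pt {x : (wedge2 M N).carrier} (hx : (snd M N).toFun x = N.pt) :
    ∃ m, (inl M N).toFun m = x := by
  rcases x with _ | m | n
  · exact ⟨M.pt, dif_pos rfl⟩
  · exact ⟨m.1, dif_neg m.2⟩
  · exact absurd hx n.2

theorem eq_of_snd_eq_of_snd_ne_pt {x y : (wedge2 M N).carrier}
    (hxy : (snd M N).toFun x = (snd M N).toFun y) (hx : (snd M N).toFun x ≠ N.pt) : x = y := by
  rcases x with _ | m | n
  · exact absurd rfl hx
  · exact absurd rfl hx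
  rcases y with _ | m' | n'
  · exact absurd hxy n.2
  · exact absurd hxy n.2
  · exact congrArg (some ∘ Sum.inr) (Subtype.ext hxy)

noncomputable def desc (f : ASetHom M Q) (g : ASetHom N Q) : ASetHom (wedge2 M N) Q where
  toFun x := x.elim Q.pt (Sum.elim (fun m => f.toFun m.1) (fun n => g.toFun n.1))
  map_pt := rfl
  map_act a x := by
    rcases x with _ | m | n
    · exact (Q.act_pt a).symm
    · dsimp only [wedge2, Option.bind, Sum.elim_inl]
      split_ifs with h
      · show Q.pt = Q.act a (f.toFun m.1)
        rw [← f.map_act, h, f.map_pt]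
      · exact f.map_act a m.1
    · dsimp only [wedge2, Option.bind, Sum.elim_inr]
      split_ifs with h
      · show Q.pt = Q.act a (g.toFun n.1)
        rw [← g.map_act, h, g.map_pt]
      · exact g.map_act a n.1

theorem desc_inl_apply (f : ASetHom M Q) (g : ASetHom N Q) (m : M.carrier) :
    (desc f g).toFun ((inl M N).toFun m) = f.toFun m := by
  by_cases hm : m = M.pt
  · rw [show (inl M N).toFun m = none from dif_pos hm, hm, f.map_pt]; rfl
  · rw [show (inl M N).toFun m = some (.inl ⟨m, hm⟩) from dif_neg hm]; rfl

theorem desc_comp_inl (f : ASetHom M Q) (g : ASetHom N Q) : (desc f g).comp (inl M N) = f :=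
  ASetHom.ext (desc_inl_apply f g)

section Splitting

variable {P : ASet A} (i : ASetHom M N) (j : ASetHom N P) (s : ASetHom P N)

theorem comp_desc_eq_snd (hji : ∀ m, j.toFun (i.toFun m) = P.pt)
    (hjs : ∀ p, j.toFun (s.toFun p) = p) : j.comp (desc i s) = snd M P := by
  refine ASetHom.ext fun x => ?_
  rcases x with _ | m | p
  · exact j.map_pt
  · exact hji m.1
  · exact hjs p.1

theorem desc_injective (hi : Function.Injective i.toFun) (hji : ∀ m, j.toFun (i.toFun m) = P.pt)
    (hjs : ∀ p, j.toFun (s.toFun p) = p) : Function.Injective (desc i s).toFun := by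
  intro x y hxy
  have hsnd : (snd M P).toFun x = (snd M P).toFun y := by
    rw [← comp_desc_eq_snd i j s hji hjs]
    exact congrArg j.toFun hxy
  by_cases hx : (snd M P).toFun x = P.pt
  · obtain ⟨m, rfl⟩ := exists_inl_of_snd_eq_pt hx
    obtain ⟨m', rfl⟩ := exists_inl_of_snd_eq_pt (hsnd ▸ hx)
    rw [desc_inl_apply, desc_inl_apply] at hxy
    rw [hi hxy]
  · exact eq_of_snd_eq_of_snd_ne_pt hsnd hx

theorem desc_surjective (hj : j.IsNormal) (hker : j.kerSet ⊆ Set.range i.toFun)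
    (hjs : ∀ p, j.toFun (s.toFun p) = p) : Function.Surjective (desc i s).toFun := by
  intro n
  by_cases hn : j.toFun n = P.pt
  · obtain ⟨m, rfl⟩ := hker hn
    exact ⟨(inl M P).toFun m, desc_inl_apply i s m⟩
  · exact ⟨some (.inr ⟨j.toFun n, hn⟩), hj (s.toFun (j.toFun n)) n (hjs _) (by rwa [hjs])⟩

end Splitting

end ASet.wedge2

/-- An admissible short exact sequence `0 → M →ⁱ N →ʲ P → 0` of `A`-sets (both
morphisms normal, `ker i = {∗}`, `im i = ker j`, `j` surjective) with `P` projective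
splits: it is isomorphic to the canonical sequence `0 → M → M ∨ P → P → 0`. -/
theorem admissible_ses_splits {A : Type u} [CommMonoidWithZero A] {M N P : ASet A}
    (i : ASetHom M N) (j : ASetHom N P) (hP : P.IsProjective)
    (hi : i.IsNormal) (hj : j.IsNormal)
    (hexM : ∀ m, i.toFun m = N.pt → m = M.pt)
    (hexN : Set.range i.toFun = j.kerSet)
    (hexP : Function.Surjective j.toFun) :
    ∃ τ : ASetHom N (ASet.wedge2 M P), τ.IsIso ∧
      τ.comp i = ASet.wedge2.inl M P ∧ (ASet.wedge2.snd M P).comp τ = j := by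
  obtain ⟨s, hjs⟩ := j.exists_section_of_isProjective hP hexP
  have hji : ∀ m, j.toFun (i.toFun m) = P.pt := fun m => hexN.subset ⟨m, rfl⟩
  have hσ : Function.Bijective (ASet.wedge2.desc i s).toFun :=
    ⟨ASet.wedge2.desc_injective i j s (i.injective_of_isNormal hi hexM) hji hjs,
      ASet.wedge2.desc_surjective i j s hj hexN.superset hjs⟩
  exact ⟨_, ASetHom.isIso_invOfBijective _ hσ,
    ASetHom.invOfBijective_comp_of_comp_eq _ hσ (ASet.wedge2.desc_comp_inl i s),
    ASetHom.comp_invOfBijective_of_comp_eq _ hσ (ASet.wedge2.comp_desc_eq_snd i j s hji hjs)⟩
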